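/- Let Ω be a finite set of players and G ≤ S_Ω a group acting supertransitively on Ω. Then every G-symmetric quasi-value φ on Ω satisfies, on each unanimity game u_R with ∅ ≠ R ⊆ Ω, φ_i(u_R) = 1/|R| for all i ∈ R and φ_i(u_R) = 0 for i ∉ R; hence φ is the Shapley value. -/

import Mathlib

open scoped BigOperators

/-- The space of cooperative games on player set `Ω`: real-valued functions on
coalitions vanishing on the empty coalition. -/
def GameSpace (Ω : Type*) [DecidableEq Ω] : Submodule ℝ (Finset Ω → ℝ) where
  carrier := {v | v ∅ = 0}
  add_mem' := by
    intro a b ha hb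
    simp only [Set.mem_setOf_eq, Pi.add_apply] at *
    simp [ha, hb]
  zero_mem' := rfl
  smul_mem' := by
    intro c v hv
    simp only [Set.mem_setOf_eq, Pi.smul_apply] at *
    simp [hv]

/-- A (linear) game value: a linear operator from games to payoff vectors. -/
abbrev GameValue (Ω : Type*) [DecidableEq Ω] := GameSpace Ω →ₗ[ℝ] (Ω → ℝ)

/-- Player `i` is a null player of the game `v`: `v(R ∪ {i}) = v(R)` for all `R`. -/
def IsNullPlayer {Ω : Type*} [DecidableEq Ω] (i : Ω) (v : GameSpace Ω) : Prop :=
  ∀ R : Finset Ω, (v : Finset Ω → ℝ) (insert i R) = (v : Finset Ω → ℝ) R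

/-- A quasi-value: a linear game value satisfying the null-player property and
efficiency. -/
def IsQuasiValue {Ω : Type*} [Fintype Ω] [DecidableEq Ω] (φ : GameValue Ω) : Prop :=
  (∀ (v : GameSpace Ω) (i : Ω), IsNullPlayer i v → φ v i = 0) ∧
  (∀ v : GameSpace Ω, ∑ i, φ v i = (v : Finset Ω → ℝ) Finset.univ)

/-- The action of a permutation on a game: `(g • v)(R) = v(g⁻¹(R))`. -/
def permGame {Ω : Type*} [DecidableEq Ω] (g : Equiv.Perm Ω) (v : GameSpace Ω) :
    GameSpace Ω :=
  ⟨fun R => (v : Finset Ω → ℝ) (R.image (g⁻¹ : Equiv.Perm Ω)), by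
    show (v : Finset Ω → ℝ) ((∅ : Finset Ω).image (g⁻¹ : Equiv.Perm Ω)) = 0
    rw [Finset.image_empty]
    exact v.2⟩

/-- `φ` is symmetric with respect to all permutations in `G`:
`φ(g • v) = g • φ(v)`, i.e. `φ(g • v)ᵢ = φ(v)_{g⁻¹ i}` for all `g ∈ G`. -/
def IsGSym {Ω : Type*} [DecidableEq Ω] (G : Subgroup (Equiv.Perm Ω))
    (φ : GameValue Ω) : Prop :=
  ∀ g ∈ G, ∀ (v : GameSpace Ω) (i : Ω), φ (permGame g v) i = φ v (g⁻¹ i)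

/-- The unanimity game `u_R` for a nonempty coalition `R`. -/
def unanimity {Ω : Type*} [DecidableEq Ω] (R : Finset Ω) (hR : R.Nonempty) :
    GameSpace Ω :=
  ⟨fun S => if R ⊆ S then (1 : ℝ) else 0, by
    show (if R ⊆ (∅ : Finset Ω) then (1 : ℝ) else 0) = 0
    simp [Finset.subset_empty, hR.ne_empty]⟩

/-- The Shapley value. -/
noncomputable def shapley (Ω : Type*) [Fintype Ω] [DecidableEq Ω] : GameValue Ω where
  toFun v i := ∑ R ∈ (Finset.univ.erase i).powerset,
      ((R.card.factorial * (Fintype.card Ω - R.card - 1).factorial : ℝ) /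
        (Fintype.card Ω).factorial) *
        ((v : Finset Ω → ℝ) (insert i R) - (v : Finset Ω → ℝ) R)
  map_add' a b := by
    funext i
    simp only [Submodule.coe_add, Pi.add_apply]
    rw [← Finset.sum_add_distrib]
    exact Finset.sum_congr rfl fun R _ => by ring
  map_smul' c a := by
    funext i
    simp only [Submodule.coe_smul, Pi.smul_apply, RingHom.id_apply, smul_eq_mul]
    rw [Finset.mul_sum]
    exact Finset.sum_congr rfl fun R _ => by ring

/-- A permutation group `G` acts supertransitively if for every subset `A`, the
setwise stabilizer `G_A = {g ∈ G : g(A) = A}` acts transitively on `A`. -/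
def Supertransitive {Ω : Type*} [DecidableEq Ω] (G : Subgroup (Equiv.Perm Ω)) : Prop :=
  ∀ A : Finset Ω, ∀ i ∈ A, ∀ j ∈ A, ∃ g ∈ G, A.image g = A ∧ g i = j

/-!
On `u_R` every player outside `R` is null, and for `i, j ∈ R` supertransitivity provides
`g ∈ G` with `g(R) = R` and `g i = j`; such a `g` fixes `u_R`, so `G`-symmetry makes
`φ(u_R)` constant on `R`, and efficiency forces the constant to be `1/|R|`. The Shapley value
is a quasi-value symmetric under all of `S_Ω`, which is supertransitive, so it takes the same
values on unanimity games. By Möbius inversion on the subset lattice the unanimity games span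
the space of games, and linearity gives `φ = shapley Ω`.
-/

open Finset

section Games

variable {Ω : Type*} [DecidableEq Ω]

lemma unanimity_apply (R : Finset Ω) (hR : R.Nonempty) (S : Finset Ω) :
    (unanimity R hR : Finset Ω → ℝ) S = if R ⊆ S then 1 else 0 := rfl

lemma permGame_apply (g : Equiv.Perm Ω) (v : GameSpace Ω) (S : Finset Ω) :
    (permGame g v : Finset Ω → ℝ) S =
      (v : Finset Ω → ℝ) (S.map (g⁻¹ : Equiv.Perm Ω).toEmbedding) := by
  rw [map_eq_image]
  rfl

lemma permGame_unanimity_of_image_eq {g : Equiv.Perm Ω} {R : Finset Ω} (hR : R.Nonempty)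
    (hgR : R.image g = R) : permGame g (unanimity R hR) = unanimity R hR := by
  ext S
  have hsub : R ⊆ S.map (g⁻¹ : Equiv.Perm Ω).toEmbedding ↔ R ⊆ S := by
    have hgR' : R.map g.toEmbedding = R := by rwa [map_eq_image]
    rw [← map_subset_map (f := g.toEmbedding), map_map, hgR']
    simp
  rw [permGame_apply, unanimity_apply, unanimity_apply]
  exact if_congr hsub rfl rfl

lemma supertransitive_top : Supertransitive (⊤ : Subgroup (Equiv.Perm Ω)) := by
  intro A i hi j hj
  refine ⟨Equiv.swap i j, Subgroup.mem_top _, eq_of_subset_of_card_le ?_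
    (card_image_of_injective _ (Equiv.injective _)).ge, Equiv.swap_apply_left i j⟩
  intro x hx
  obtain ⟨y, hy, rfl⟩ := mem_image.1 hx
  rw [Equiv.swap_apply_def]
  split_ifs <;> assumption

lemma IsGSym.apply_unanimity_eq {G : Subgroup (Equiv.Perm Ω)} {φ : GameValue Ω}
    (hs : IsGSym G φ) (hG : Supertransitive G) {R : Finset Ω} (hR : R.Nonempty) {i j : Ω}
    (hi : i ∈ R) (hj : j ∈ R) : φ (unanimity R hR) i = φ (unanimity R hR) j := by
  obtain ⟨g, hgG, hgR, rfl⟩ := hG R i hi j hj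
  simpa [permGame_unanimity_of_image_eq hR hgR] using (hs g hgG (unanimity R hR) (g i)).symm

noncomputable def shapleyWeight (n s : ℕ) : ℝ :=
  (s.factorial * (n - s - 1).factorial : ℝ) / n.factorial

lemma mul_shapleyWeight_pred {n t : ℕ} (ht : 0 < t) (htn : t ≤ n) :
    t * shapleyWeight n (t - 1) = (t.factorial * (n - t).factorial : ℝ) / n.factorial := by
  rw [shapleyWeight, show n - (t - 1) - 1 = n - t by omega, ← mul_div_assoc, ← mul_assoc]
  exact_mod_cast congrArg (fun m : ℕ => (m * (n - t).factorial : ℝ) / n.factorial)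
    (Nat.mul_factorial_pred ht.ne')

lemma sub_mul_shapleyWeight {n t : ℕ} (htn : t < n) :
    ((n - t : ℕ) : ℝ) * shapleyWeight n t =
      (t.factorial * (n - t).factorial : ℝ) / n.factorial := by
  rw [shapleyWeight, ← mul_div_assoc, mul_left_comm,
    ← Nat.mul_factorial_pred (by omega : n - t ≠ 0)]
  push_cast
  ring

lemma mul_shapleyWeight_pred_sub_mul_shapleyWeight {n t : ℕ} (ht : 0 < t) (htn : t ≤ n) :
    t * shapleyWeight n (t - 1) - ((n - t : ℕ) : ℝ) * shapleyWeight n t =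
      if t = n then 1 else 0 := by
  rw [mul_shapleyWeight_pred ht htn]
  split_ifs with h
  · subst h
    simp [Nat.factorial_ne_zero]
  · rw [sub_mul_shapleyWeight (lt_of_le_of_ne htn h), sub_self]

section Finite

variable [Fintype Ω]

lemma IsQuasiValue.apply_unanimity_of_notMem {φ : GameValue Ω} (hq : IsQuasiValue φ)
    {R : Finset Ω} (hR : R.Nonempty) {i : Ω} (hi : i ∉ R) : φ (unanimity R hR) i = 0 :=
  hq.1 _ i fun S => by simp [unanimity_apply, subset_insert_iff_of_notMem hi]

theorem IsQuasiValue.apply_unanimity {G : Subgroup (Equiv.Perm Ω)} {φ : GameValue Ω}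
    (hq : IsQuasiValue φ) (hG : Supertransitive G) (hs : IsGSym G φ)
    (R : Finset Ω) (hR : R.Nonempty) (i : Ω) :
    φ (unanimity R hR) i = if i ∈ R then 1 / (#R : ℝ) else 0 := by
  split_ifs with hi
  · have hsum : ∑ j, φ (unanimity R hR) j = #R * φ (unanimity R hR) i := by
      rw [← sum_subset (subset_univ R) fun j _ hj => hq.apply_unanimity_of_notMem hR hj,
        sum_congr rfl fun j hj => hs.apply_unanimity_eq hG hR hj hi, sum_const, nsmul_eq_mul]
    have hR0 : (#R : ℝ) ≠ 0 := by exact_mod_cast hR.card_pos.ne'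
    have heff := hq.2 (unanimity R hR)
    rw [hsum, unanimity_apply, if_pos (subset_univ R)] at heff
    field_simp
    linarith
  · exact hq.apply_unanimity_of_notMem hR hi

lemma sum_sum_powerset_erase {M : Type*} [AddCommMonoid M] (h : Finset Ω → M) :
    ∑ i, ∑ S ∈ (univ.erase i).powerset, h S = ∑ S, #Sᶜ • h S := by
  rw [sum_comm' (t' := univ) (s' := fun S => Sᶜ) (fun i S => by simp [subset_erase])]
  simp_rw [sum_const]

lemma sum_powerset_erase_insert {M : Type*} [AddCommMonoid M] (h : Finset Ω → M) (i : Ω) :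
    ∑ S ∈ (univ.erase i).powerset, h (insert i S) = ∑ T with i ∈ T, h T :=
  sum_nbij' (insert i) (·.erase i) (by simp) (by simp [erase_subset_erase])
    (fun S hS => erase_insert fun hi => by simpa using mem_powerset.1 hS hi)
    (fun T hT => insert_erase (mem_filter.1 hT).2) (fun _ _ => rfl)

lemma sum_sum_powerset_erase_insert {M : Type*} [AddCommMonoid M] (h : Finset Ω → M) :
    ∑ i, ∑ S ∈ (univ.erase i).powerset, h (insert i S) = ∑ T, #T • h T := by
  simp_rw [sum_powerset_erase_insert]
  rw [sum_comm' (t' := univ) (s' := fun T => T) (fun i T => by simp)]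
  simp_rw [sum_const]

lemma shapley_apply (v : GameSpace Ω) (i : Ω) :
    shapley Ω v i = ∑ S ∈ (univ.erase i).powerset, shapleyWeight (Fintype.card Ω) #S *
      ((v : Finset Ω → ℝ) (insert i S) - (v : Finset Ω → ℝ) S) := rfl

lemma shapley_apply_of_isNullPlayer {v : GameSpace Ω} {i : Ω} (h : IsNullPlayer i v) :
    shapley Ω v i = 0 :=
  sum_eq_zero fun S _ => by rw [h S, sub_self, mul_zero]

lemma isGSym_shapley (G : Subgroup (Equiv.Perm Ω)) : IsGSym G (shapley Ω) := by
  intro g _ v i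
  simp only [shapley_apply, permGame_apply]
  refine sum_equiv (Equiv.finsetCongr g⁻¹) (fun S => ?_) (fun S _ => ?_)
  · rw [Equiv.finsetCongr_apply, mem_powerset, mem_powerset,
      ← map_subset_map (f := (g⁻¹ : Equiv.Perm Ω).toEmbedding), map_erase, map_univ_equiv]
    rfl
  · simp [map_insert]

theorem sum_shapley (v : GameSpace Ω) : ∑ i, shapley Ω v i = (v : Finset Ω → ℝ) univ := by
  set w := shapleyWeight (Fintype.card Ω)
  let V : Finset Ω → ℝ := v
  have hV : V ∅ = 0 := v.2
  have hcoef : ∀ T : Finset Ω,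
      (#T * w (#T - 1) - #Tᶜ * w #T) * V T = if T = univ then V T else 0 := by
    intro T
    rcases T.eq_empty_or_nonempty with rfl | hT
    · simp [hV]
    · rw [card_compl,
        mul_shapleyWeight_pred_sub_mul_shapleyWeight hT.card_pos (card_le_univ T)]
      simp [card_eq_iff_eq_univ]
  calc ∑ i, shapley Ω v i
      = ∑ i, ∑ S ∈ (univ.erase i).powerset, w #S * V (insert i S)
        - ∑ i, ∑ S ∈ (univ.erase i).powerset, w #S * V S := by
        simp only [shapley_apply, mul_sub, sum_sub_distrib]
        rfl
    _ = ∑ T, #T • (w (#T - 1) * V T) - ∑ T, #Tᶜ • (w #T * V T) := by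
        rw [sum_sum_powerset_erase, ← sum_sum_powerset_erase_insert]
        congr 1
        refine sum_congr rfl fun i _ => sum_congr rfl fun S hS => ?_
        rw [card_insert_of_notMem fun hi => by simpa using mem_powerset.1 hS hi,
          Nat.add_sub_cancel]
    _ = ∑ T, (#T * w (#T - 1) - #Tᶜ * w #T) * V T := by
        rw [← sum_sub_distrib]
        simp only [nsmul_eq_mul]
        exact sum_congr rfl fun T _ => by ring
    _ = V univ := by simp only [hcoef, sum_ite_eq', mem_univ, if_true]

theorem isQuasiValue_shapley : IsQuasiValue (shapley Ω) :=
  ⟨fun _ _ => shapley_apply_of_isNullPlayer, sum_shapley⟩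

lemma exists_sum_powerset_eq {𝕜 : Type*} [Field 𝕜] (v : Finset Ω → 𝕜) :
    ∃ c : Finset Ω → 𝕜, ∀ T, v T = ∑ R ∈ T.powerset, c R := by
  let L : (Finset Ω → 𝕜) →ₗ[𝕜] (Finset Ω → 𝕜) :=
    LinearMap.pi fun T => ∑ R ∈ T.powerset, LinearMap.proj R
  have hL : ∀ c T, L c T = ∑ R ∈ T.powerset, c R := by simp [L]
  have hinj : Function.Injective L := by
    rw [← LinearMap.ker_eq_bot, LinearMap.ker_eq_bot']
    intro c hc
    funext R
    rw [IncidenceAlgebra.moebius_inversion_bot c (L c)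
      (fun T => by rw [hL, Iic_eq_powerset]) R]
    simp [hc]
  obtain ⟨c, hc⟩ := LinearMap.injective_iff_surjective.1 hinj v
  exact ⟨c, fun T => by rw [← hc, hL]⟩

theorem span_range_unanimity : Submodule.span ℝ
    (Set.range fun R : {R : Finset Ω // R.Nonempty} => unanimity R.1 R.2) = ⊤ := by
  rw [Submodule.eq_top_iff']
  intro v
  obtain ⟨c, hc⟩ := exists_sum_powerset_eq (v : Finset Ω → ℝ)
  have hc0 : c ∅ = 0 := by
    have hv : (v : Finset Ω → ℝ) ∅ = 0 := v.2
    simpa [hv] using (hc ∅).symm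
  have hv : v = ∑ R : {R : Finset Ω // R.Nonempty}, c R • unanimity R.1 R.2 := by
    ext T
    simp only [hc T, AddSubmonoidClass.coe_finsetSum, SetLike.val_smul, Finset.sum_apply,
      Pi.smul_apply, unanimity_apply, smul_eq_mul]
    rw [← sum_subtype (univ.filter Finset.Nonempty) (by simp)
        fun R => c R * if R ⊆ T then 1 else 0, sum_filter,
      show T.powerset = univ.filter (· ⊆ T) by ext; simp, sum_filter]
    refine sum_congr rfl fun R _ => ?_
    rcases R.eq_empty_or_nonempty with rfl | hR
    · simp [hc0]
    · simp [hR]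
  rw [hv]
  exact Submodule.sum_mem _ fun R _ => Submodule.smul_mem _ _ (Submodule.subset_span ⟨R, rfl⟩)

end Finite

end Games

/-- if `G` acts supertransitively, then every `G`-symmetric
quasi-value `φ` satisfies `φᵢ(u_R) = 1/|R|` for `i ∈ R` and `0` otherwise, on
every unanimity game; hence `φ` is the Shapley value. -/
theorem stmt7 {Ω : Type*} [Fintype Ω] [DecidableEq Ω] (G : Subgroup (Equiv.Perm Ω))
    (hG : Supertransitive G) (φ : GameValue Ω) (hq : IsQuasiValue φ)
    (hs : IsGSym G φ) :
    (∀ (R : Finset Ω) (hR : R.Nonempty) (i : Ω),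
        φ (unanimity R hR) i = if i ∈ R then 1 / (R.card : ℝ) else 0) ∧
    φ = shapley Ω := by
  refine ⟨hq.apply_unanimity hG hs, LinearMap.ext_on_range span_range_unanimity fun R => ?_⟩
  funext i
  rw [hq.apply_unanimity hG hs,
    isQuasiValue_shapley.apply_unanimity supertransitive_top (isGSym_shapley ⊤)]
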